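/- arXiv:1810.06741 — 5 statements merged into one kernel-verified Lean document; each statement's English description precedes it below -/
import Mathlib

section
/- Let $P_b$ be uniformly distributed on $[P_{\min}, P_{\max}]$ with $0 \le P_{\min} < P_{\max}$, let $g_a, g_b, P_a > 0$, $\sigma_w^2 \ge 0$, priors $\pi_0, \pi_1 \ge 0$ with $\pi_0 + \pi_1 = 1$, and suppose $g_a P_a \le g_b (P_{\max} - P_{\min})$. Define $\mathbb{P}_E(\gamma) = \pi_0 \mathbb{P}[g_b P_b + \sigma_w^2 > \gamma] + \pi_1 \mathbb{P}[g_b P_b + g_a P_a + \sigma_w^2 < \gamma]$. Then for all $\gamma \in \mathbb{R}$, $\mathbb{P}_E(\gamma) \ge \min(\pi_0, \pi_1)\left(1 - \frac{g_a P_a}{g_b (P_{\max} - P_{\min})}\right)$, and this lower bound is attained: at $\gamma^* = g_b P_{\min} + g_a P_a + \sigma_w^2$ if $\pi_1 \ge \pi_0$, and at $\gamma^* = g_b P_{\max} + \sigma_w^2$ if $\pi_0 > \pi_1$. -/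
open MeasureTheory Set

/-!
Write `δ = g_a P_a / g_b` and `t = (γ - σ_w²) / g_b`. A false alarm is the event `P_b > t` and a
missed detection the event `P_b < t - δ`; together with `P_b ∈ [t - δ, t]`, which has probability
at most `δ / (P_max - P_min)`, they exhaust the sample space. Weighting both error probabilities by
`min π₀ π₁` gives the lower bound. At `t = P_min + δ` the missed detection is null and the false
alarm has probability exactly `1 - δ / (P_max - P_min)`; at `t = P_max` the roles are swapped.
-/

namespace MeasureTheory.pdf.IsUniform

variable {Ω : Type*} [MeasurableSpace Ω] {ℙ : Measure Ω} {X : Ω → ℝ} {a b : ℝ}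

theorem measure_preimage_eq_volume_inter_div (hu : IsUniform X (Icc a b) ℙ) (hab : a < b)
    {A : Set ℝ} (hA : MeasurableSet A) :
    ℙ (X ⁻¹' A) = volume (Icc a b ∩ A) / ENNReal.ofReal (b - a) := by
  have hvol : volume (Icc a b) = ENNReal.ofReal (b - a) := Real.volume_Icc
  rw [hu.measure_preimage (by simpa [hvol] using hab) (by simp [hvol]) hA, hvol]

theorem isProbabilityMeasure_of_Icc (hu : IsUniform X (Icc a b) ℙ) (hab : a < b) :
    IsProbabilityMeasure ℙ := by
  have hvol : volume (Icc a b) = ENNReal.ofReal (b - a) := Real.volume_Icc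
  exact hu.isProbabilityMeasure (by simpa [hvol] using hab) (by simp [hvol])

theorem measure_gt (hu : IsUniform X (Icc a b) ℙ) (hab : a < b) {t : ℝ} (ht : a ≤ t) :
    ℙ {ω | t < X ω} = ENNReal.ofReal ((b - t) / (b - a)) := by
  have hset : Icc a b ∩ Ioi t = Ioc t b := by
    ext x
    simp only [mem_inter_iff, mem_Icc, mem_Ioi, mem_Ioc]
    constructor
    · rintro ⟨⟨-, hxb⟩, htx⟩
      exact ⟨htx, hxb⟩
    · rintro ⟨htx, hxb⟩
      exact ⟨⟨by linarith, hxb⟩, htx⟩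
  change ℙ (X ⁻¹' Ioi t) = _
  rw [hu.measure_preimage_eq_volume_inter_div hab measurableSet_Ioi, hset, Real.volume_Ioc,
    ENNReal.ofReal_div_of_pos (sub_pos.2 hab)]

theorem measure_lt (hu : IsUniform X (Icc a b) ℙ) (hab : a < b) {t : ℝ} (ht : t ≤ b) :
    ℙ {ω | X ω < t} = ENNReal.ofReal ((t - a) / (b - a)) := by
  have hset : Icc a b ∩ Iio t = Ico a t := by
    ext x
    simp only [mem_inter_iff, mem_Icc, mem_Iio, mem_Ico]
    constructor
    · rintro ⟨⟨hax, -⟩, hxt⟩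
      exact ⟨hax, hxt⟩
    · rintro ⟨hax, hxt⟩
      exact ⟨⟨hax, by linarith⟩, hxt⟩
  change ℙ (X ⁻¹' Iio t) = _
  rw [hu.measure_preimage_eq_volume_inter_div hab measurableSet_Iio, hset, Real.volume_Ico,
    ENNReal.ofReal_div_of_pos (sub_pos.2 hab)]

theorem measure_mem_Icc_le (hu : IsUniform X (Icc a b) ℙ) (hab : a < b) (s t : ℝ) :
    ℙ (X ⁻¹' Icc s t) ≤ ENNReal.ofReal ((t - s) / (b - a)) := by
  rw [hu.measure_preimage_eq_volume_inter_div hab measurableSet_Icc,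
    ENNReal.ofReal_div_of_pos (sub_pos.2 hab)]
  gcongr
  exact (measure_mono inter_subset_right).trans_eq Real.volume_Icc

theorem ofReal_one_sub_le_measure_gt_add_measure_lt (hu : IsUniform X (Icc a b) ℙ)
    (hab : a < b) {δ : ℝ} (hδ : 0 ≤ δ) (t : ℝ) :
    ENNReal.ofReal (1 - δ / (b - a)) ≤ ℙ {ω | t < X ω} + ℙ {ω | X ω < t - δ} := by
  have := hu.isProbabilityMeasure_of_Icc hab
  have hcover : univ ⊆ {ω | t < X ω} ∪ {ω | X ω < t - δ} ∪ X ⁻¹' Icc (t - δ) t := by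
    intro ω _
    rcases lt_or_ge t (X ω) with htX | hXt
    · exact Or.inl (Or.inl htX)
    rcases lt_or_ge (X ω) (t - δ) with hXtδ | htδX
    · exact Or.inl (Or.inr hXtδ)
    · exact Or.inr ⟨htδX, hXt⟩
  have hwindow := hu.measure_mem_Icc_le hab (t - δ) t
  rw [sub_sub_cancel] at hwindow
  have hone : 1 ≤ ℙ {ω | t < X ω} + ℙ {ω | X ω < t - δ} + ENNReal.ofReal (δ / (b - a)) :=
    calc 1 = ℙ univ := measure_univ.symm
      _ ≤ ℙ ({ω | t < X ω} ∪ {ω | X ω < t - δ} ∪ X ⁻¹' Icc (t - δ) t) := measure_mono hcover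
      _ ≤ ℙ {ω | t < X ω} + ℙ {ω | X ω < t - δ} + ℙ (X ⁻¹' Icc (t - δ) t) :=
        (measure_union_le _ _).trans (add_le_add_left (measure_union_le _ _) _)
      _ ≤ _ := by gcongr
  rw [ENNReal.ofReal_sub _ (div_nonneg hδ (sub_pos.2 hab).le), ENNReal.ofReal_one]
  exact tsub_le_iff_right.2 hone

end MeasureTheory.pdf.IsUniform

theorem ofReal_min_mul_le_of_le_add {p q r : ℝ} {x y : ENNReal} (hp : 0 ≤ p) (hq : 0 ≤ q)
    (h : ENNReal.ofReal r ≤ x + y) :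
    ENNReal.ofReal (min p q * r) ≤ ENNReal.ofReal p * x + ENNReal.ofReal q * y :=
  calc ENNReal.ofReal (min p q * r) = ENNReal.ofReal (min p q) * ENNReal.ofReal r :=
        ENNReal.ofReal_mul (le_min hp hq)
    _ ≤ ENNReal.ofReal (min p q) * x + ENNReal.ofReal (min p q) * y := by
        rw [← mul_add]; gcongr
    _ ≤ ENNReal.ofReal p * x + ENNReal.ofReal q * y := by
        gcongr
        exacts [min_le_left p q, min_le_right p q]

theorem stmt_3_general
    {Ω : Type*} [MeasurableSpace Ω] (ℙ : Measure Ω)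
    (Pb : Ω → ℝ) (Pmin Pmax ga gb Pa σw2 : ℝ) (π0 π1 : ℝ)
    (hlt : Pmin < Pmax) (hga : 0 < ga) (hgb : 0 < gb)
    (hPa : 0 < Pa) (hπ0 : 0 ≤ π0) (hπ1 : 0 ≤ π1)
    (hunif : pdf.IsUniform Pb (Icc Pmin Pmax) ℙ volume) :
    (∀ γ : ℝ,
      ENNReal.ofReal (min π0 π1 * (1 - ga * Pa / (gb * (Pmax - Pmin)))) ≤
        ENNReal.ofReal π0 * ℙ {ω | gb * Pb ω + σw2 > γ} +
          ENNReal.ofReal π1 * ℙ {ω | gb * Pb ω + ga * Pa + σw2 < γ}) ∧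
    (π1 ≥ π0 →
      ENNReal.ofReal π0 * ℙ {ω | gb * Pb ω + σw2 > gb * Pmin + ga * Pa + σw2} +
          ENNReal.ofReal π1 * ℙ {ω | gb * Pb ω + ga * Pa + σw2 < gb * Pmin + ga * Pa + σw2} =
        ENNReal.ofReal (min π0 π1 * (1 - ga * Pa / (gb * (Pmax - Pmin))))) ∧
    (π0 > π1 →
      ENNReal.ofReal π0 * ℙ {ω | gb * Pb ω + σw2 > gb * Pmax + σw2} +
          ENNReal.ofReal π1 * ℙ {ω | gb * Pb ω + ga * Pa + σw2 < gb * Pmax + σw2} =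
        ENNReal.ofReal (min π0 π1 * (1 - ga * Pa / (gb * (Pmax - Pmin))))) := by
  have hδ : 0 ≤ ga * Pa / gb := by positivity
  have hfalseAlarm (γ : ℝ) : {ω | gb * Pb ω + σw2 > γ} = {ω | (γ - σw2) / gb < Pb ω} := by
    ext ω
    simp only [mem_ofPred_eq, div_lt_iff₀ hgb]
    constructor <;> intro h <;> linarith
  have hmissed (γ : ℝ) : {ω | gb * Pb ω + ga * Pa + σw2 < γ} =
      {ω | Pb ω < (γ - σw2) / gb - ga * Pa / gb} := by
    ext ω
    simp only [mem_ofPred_eq, ← sub_div, lt_div_iff₀ hgb]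
    constructor <;> intro h <;> linarith
  have hbound :
      1 - ga * Pa / (gb * (Pmax - Pmin)) = (Pmax - (Pmin + ga * Pa / gb)) / (Pmax - Pmin) := by
    field_simp [(sub_pos.2 hlt).ne']
    ring
  refine ⟨fun γ => ?_, fun hge => ?_, fun hgt => ?_⟩
  · rw [hfalseAlarm, hmissed, ← div_div]
    exact ofReal_min_mul_le_of_le_add hπ0 hπ1
      (hunif.ofReal_one_sub_le_measure_gt_add_measure_lt hlt hδ _)
  · have ht : (gb * Pmin + ga * Pa + σw2 - σw2) / gb = Pmin + ga * Pa / gb := by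
      field_simp
      ring
    rw [hfalseAlarm, hmissed, ht, add_sub_cancel_right,
      hunif.measure_gt hlt (le_add_of_nonneg_right hδ), hunif.measure_lt hlt hlt.le, sub_self,
      zero_div, ENNReal.ofReal_zero, mul_zero, add_zero, ← ENNReal.ofReal_mul hπ0,
      min_eq_left hge, hbound]
  · have ht : (gb * Pmax + σw2 - σw2) / gb = Pmax := by
      field_simp
      ring
    rw [hfalseAlarm, hmissed, ht, hunif.measure_gt hlt hlt.le,
      hunif.measure_lt hlt (sub_le_self _ hδ), sub_self, zero_div, ENNReal.ofReal_zero, mul_zero,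
      zero_add, ← ENNReal.ofReal_mul hπ1, min_eq_right hgt.le, hbound]
    rw [sub_sub, add_comm (ga * Pa / gb)]

/-- When `g_a P_a ≤ g_b (Pmax - Pmin)`, the detection error probability at Willie satisfies
`P_E(γ) ≥ min(π0,π1) (1 - g_a P_a / (g_b (Pmax - Pmin)))` for every threshold `γ`, and the
bound is attained at `γ* = g_b Pmin + g_a P_a + σw²` if `π1 ≥ π0`, and at
`γ* = g_b Pmax + σw²` if `π0 > π1`. -/
theorem stmt_3
    {Ω : Type*} [MeasurableSpace Ω] (ℙ : Measure Ω)
    (Pb : Ω → ℝ) (Pmin Pmax ga gb Pa σw2 : ℝ) (π0 π1 : ℝ)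
    (hPmin : 0 ≤ Pmin) (hlt : Pmin < Pmax) (hga : 0 < ga) (hgb : 0 < gb)
    (hPa : 0 < Pa) (hσ : 0 ≤ σw2) (hπ0 : 0 ≤ π0) (hπ1 : 0 ≤ π1)
    (hsum : π0 + π1 = 1)
    (hgap : ga * Pa ≤ gb * (Pmax - Pmin))
    (hunif : pdf.IsUniform Pb (Icc Pmin Pmax) ℙ volume) :
    (∀ γ : ℝ,
      ENNReal.ofReal (min π0 π1 * (1 - ga * Pa / (gb * (Pmax - Pmin)))) ≤
        ENNReal.ofReal π0 * ℙ {ω | gb * Pb ω + σw2 > γ} +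
          ENNReal.ofReal π1 * ℙ {ω | gb * Pb ω + ga * Pa + σw2 < γ}) ∧
    (π1 ≥ π0 →
      ENNReal.ofReal π0 * ℙ {ω | gb * Pb ω + σw2 > gb * Pmin + ga * Pa + σw2} +
          ENNReal.ofReal π1 * ℙ {ω | gb * Pb ω + ga * Pa + σw2 < gb * Pmin + ga * Pa + σw2} =
        ENNReal.ofReal (min π0 π1 * (1 - ga * Pa / (gb * (Pmax - Pmin))))) ∧
    (π0 > π1 →
      ENNReal.ofReal π0 * ℙ {ω | gb * Pb ω + σw2 > gb * Pmax + σw2} +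
          ENNReal.ofReal π1 * ℙ {ω | gb * Pb ω + ga * Pa + σw2 < gb * Pmax + σw2} =
        ENNReal.ofReal (min π0 π1 * (1 - ga * Pa / (gb * (Pmax - Pmin))))) :=
  stmt_3_general ℙ Pb Pmin Pmax ga gb Pa σw2 π0 π1 hlt hga hgb hPa hπ0 hπ1 hunif
end

section
/- Let $\lambda_{ab}, \lambda_{bb}, \mu, \phi > 0$, $\sigma_b^2 \ge 0$ and $0 \le P_{\min} < P_{\max}$. Then $\frac{1}{P_{\max}-P_{\min}}\int_{P_{\min}}^{P_{\max}} \int_0^\infty \left[1 - e^{-\lambda_{ab}\mu(\phi y z + \sigma_b^2)}\right] \lambda_{bb} e^{-\lambda_{bb} y}\, dy\, dz \;=\; 1 - \frac{\lambda_{bb} e^{-\lambda_{ab}\mu\sigma_b^2}}{(P_{\max}-P_{\min})\,\lambda_{ab}\phi\mu}\,\ln\!\left[\frac{\lambda_{bb}+\lambda_{ab}\phi\mu P_{\max}}{\lambda_{bb}+\lambda_{ab}\phi\mu P_{\min}}\right].$ -/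
/-!
For fixed `z`, the inner integral is `1 - E[exp (-(c y + k))]` for `y` exponential with rate
`lbb`, where `c = a z` with `a = lab * phi * mu` and `k = lab * mu * sb2`; since
`E[exp (-c y)] = lbb / (lbb + c)` it equals `1 - lbb e^{-k} / (lbb + a z)`. Averaging over
`z ∈ [Pmin, Pmax]` leaves the integral of `1 / (lbb + a z)`, a logarithm.
-/

open MeasureTheory Set Real

theorem integral_exp_neg_mul_Ioi_zero {b : ℝ} (hb : 0 < b) :
    ∫ y in Ioi (0 : ℝ), exp (-(b * y)) = b⁻¹ := by
  simpa [neg_div, one_div] using integral_exp_mul_Ioi (neg_neg_of_pos hb) 0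

theorem integral_one_sub_exp_neg_mul_exp_neg_Ioi {l c : ℝ} (hl : 0 < l) (hlc : 0 < l + c)
    (k : ℝ) :
    ∫ y in Ioi (0 : ℝ), (1 - exp (-(c * y + k))) * (l * exp (-(l * y))) =
      1 - l * exp (-k) / (l + c) := by
  have hexp : ∀ y, exp (-(c * y + k)) * exp (-(l * y)) = exp (-k) * exp (-((l + c) * y)) := by
    intro y
    rw [← exp_add, ← exp_add]
    ring_nf
  have hint : ∀ {b : ℝ}, 0 < b → IntegrableOn (fun y => exp (-(b * y))) (Ioi 0) := fun hb => by
    simpa only [neg_mul] using exp_neg_integrableOn_Ioi 0 hb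
  calc ∫ y in Ioi (0 : ℝ), (1 - exp (-(c * y + k))) * (l * exp (-(l * y)))
      = ∫ y in Ioi (0 : ℝ), l * exp (-(l * y)) - l * exp (-k) * exp (-((l + c) * y)) := by
        congr 1 with y
        linear_combination (-l) * hexp y
    _ = l * l⁻¹ - l * exp (-k) * (l + c)⁻¹ := by
        rw [integral_sub ((hint hl).const_mul _) ((hint hlc).const_mul _), integral_const_mul,
          integral_const_mul, integral_exp_neg_mul_Ioi_zero hl,
          integral_exp_neg_mul_Ioi_zero hlc]
    _ = 1 - l * exp (-k) / (l + c) := by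
        rw [mul_inv_cancel₀ hl.ne', div_eq_mul_inv]

theorem integral_one_div_add_mul {l a p q : ℝ} (ha : a ≠ 0) (hp : 0 < l + a * p)
    (hq : 0 < l + a * q) :
    ∫ z in p..q, 1 / (l + a * z) = a⁻¹ * log ((l + a * q) / (l + a * p)) := by
  have := intervalIntegral.integral_comp_mul_add (a := p) (b := q) (fun u : ℝ => 1 / u) ha l
  simp only [smul_eq_mul] at this
  rw [integral_one_div_of_pos (by linarith) (by linarith)] at this
  simpa only [add_comm] using this

theorem stmt_5_general (lab lbb mu phi sb2 Pmin Pmax : ℝ)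
    (hlab : 0 < lab) (hlbb : 0 < lbb) (hmu : 0 < mu) (hphi : 0 < phi)
    (hPmin : 0 ≤ Pmin) (hlt : Pmin < Pmax) :
    (1 / (Pmax - Pmin)) *
        ∫ z in Pmin..Pmax,
          ∫ y in Ioi (0 : ℝ),
            (1 - exp (-(lab * mu * (phi * y * z + sb2)))) * (lbb * exp (-(lbb * y))) =
      1 - lbb * exp (-(lab * mu * sb2)) / ((Pmax - Pmin) * (lab * phi * mu)) *
        log ((lbb + lab * phi * mu * Pmax) / (lbb + lab * phi * mu * Pmin)) := by
  set a := lab * phi * mu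
  set C := lbb * exp (-(lab * mu * sb2))
  have hpos : ∀ z ∈ Icc Pmin Pmax, 0 < lbb + a * z := fun z hz => by
    have : 0 ≤ z := hPmin.trans hz.1
    positivity
  have hinner : ∀ z ∈ uIcc Pmin Pmax,
      ∫ y in Ioi (0 : ℝ),
          (1 - exp (-(lab * mu * (phi * y * z + sb2)))) * (lbb * exp (-(lbb * y))) =
        1 - C * (1 / (lbb + a * z)) := fun z hz => by
    rw [uIcc_of_le hlt.le] at hz
    rw [mul_one_div, ← integral_one_sub_exp_neg_mul_exp_neg_Ioi hlbb (hpos z hz)]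
    congr 1 with y
    congr 3
    ring
  have hcont : ContinuousOn (fun z => 1 / (lbb + a * z)) (uIcc Pmin Pmax) := by
    rw [uIcc_of_le hlt.le]
    exact continuousOn_const.div (by fun_prop) fun z hz => (hpos z hz).ne'
  rw [intervalIntegral.integral_congr hinner, intervalIntegral.integral_sub
      intervalIntegrable_const (hcont.intervalIntegrable.const_mul C),
    intervalIntegral.integral_const_mul, integral_one_div_add_mul (by positivity)
      (hpos _ (left_mem_Icc.2 hlt.le)) (hpos _ (right_mem_Icc.2 hlt.le)),
    intervalIntegral.integral_const, smul_eq_mul, mul_one]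
  have : Pmax - Pmin ≠ 0 := sub_ne_zero.2 hlt.ne'
  field_simp

/-- The transmission outage probability from Alice to Bob (Lemma 1), written as an
iterated integral over Bob's uniformly distributed AN power and the exponential
self-interference channel gain. -/
theorem stmt_5 (lab lbb mu phi sb2 Pmin Pmax : ℝ)
    (hlab : 0 < lab) (hlbb : 0 < lbb) (hmu : 0 < mu) (hphi : 0 < phi)
    (hsb2 : 0 ≤ sb2) (hPmin : 0 ≤ Pmin) (hlt : Pmin < Pmax) :
    (1 / (Pmax - Pmin)) *
        ∫ z in Pmin..Pmax,
          ∫ y in Ioi (0 : ℝ),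
            (1 - exp (-(lab * mu * (phi * y * z + sb2)))) * (lbb * exp (-(lbb * y))) =
      1 - lbb * exp (-(lab * mu * sb2)) / ((Pmax - Pmin) * (lab * phi * mu)) *
        log ((lbb + lab * phi * mu * Pmax) / (lbb + lab * phi * mu * Pmin)) :=
  stmt_5_general lab lbb mu phi sb2 Pmin Pmax hlab hlbb hmu hphi hPmin hlt
end

section
/- Fix $\lambda_{ab}, \lambda_{bb}, \lambda_{aw}, \lambda_{bw}, \mu, \phi, P_a, P_{\max} > 0$, $\sigma_b^2 \ge 0$, and priors $\pi_0, \pi_1 \ge 0$ with $\min(\pi_0,\pi_1)>0$. For $P_{\min} \in [0, P_{\max})$ define $t(P_{\min}) = \frac{\lambda_{bw}P_a}{\lambda_{bw}P_a + \lambda_{aw}(P_{\max}-P_{\min})}$, $\overline{\mathbb{P}_E^*}(P_{\min}) = \min(\pi_0,\pi_1)\,(1 + t\ln t - t^2)$, and $\delta_{ab}(P_{\min}) = 1 - \frac{\lambda_{bb} e^{-\lambda_{ab}\mu\sigma_b^2}}{(P_{\max}-P_{\min})\lambda_{ab}\phi\mu}\ln\!\left[\frac{\lambda_{bb}+\lambda_{ab}\phi\mu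 P_{\max}}{\lambda_{bb}+\lambda_{ab}\phi\mu P_{\min}}\right]$. Then $\overline{\mathbb{P}_E^*}$ is strictly decreasing in $P_{\min}$ and $\delta_{ab}$ is nondecreasing in $P_{\min}$ on $[0,P_{\max})$; consequently, for any covert rate constraint of the form $\pi_1 R_{ab}(1-\delta_{ab}(P_{\min})) \ge \tau$, the choice $P_{\min}^* = 0$ maximizes $\overline{\mathbb{P}_E^*}$ among all feasible $P_{\min}$: if $P_{\min}$ is feasible then so is $0$, and $\overline{\mathbb{P}_E^*}(0) \ge \overline{\mathbb{P}_E^*}(P_{\min})$. -/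
/-!
Willie's error probability is `min π₀ π₁ · g(t)` with `g s = 1 + s log s - s²`, which is strictly
decreasing for `s > 0` since `g' s = log s + 1 - 2s ≤ -s`, while `t` increases with `P_min`.
The outage probability is `1 - C · (log v - log a) / (v - a)` with `a = λ_bb + k P_min` and
`v = λ_bb + k P_max`: the slope of a secant of the concave function `log` through the fixed point
`v`, which decreases as `a` grows.
-/

open Real Set

lemma strictAntiOn_one_add_mul_log_sub_sq :
    StrictAntiOn (fun s : ℝ => 1 + s * log s - s ^ 2) (Ioi 0) := by
  have hderiv : ∀ s ∈ Ioi (0 : ℝ),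
      HasDerivAt (fun s => 1 + s * log s - s ^ 2) (log s + 1 - 2 * s) s := fun s hs => by
    simpa using ((hasDerivAt_mul_log (ne_of_gt hs)).const_add 1).fun_sub (hasDerivAt_pow 2 s)
  refine strictAntiOn_of_hasDerivWithinAt_neg (f' := fun s => log s + 1 - 2 * s) (convex_Ioi 0)
    (fun s hs => (hderiv s hs).continuousAt.continuousWithinAt) (fun s hs => ?_) (fun s hs => ?_)
  · rw [interior_Ioi] at hs ⊢
    exact (hderiv s hs).hasDerivWithinAt
  · rw [interior_Ioi] at hs
    linarith [log_le_sub_one_of_pos hs, mem_Ioi.mp hs]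

section Ratio

variable {c d P : ℝ}

lemma div_add_mul_sub_pos (hc : 0 < c) (hd : 0 < d) {x : ℝ} (hx : x ≤ P) :
    0 < c / (c + d * (P - x)) := by
  positivity

lemma strictMonoOn_div_add_mul_sub (hc : 0 < c) (hd : 0 < d) :
    StrictMonoOn (fun x => c / (c + d * (P - x))) (Iic P) := by
  intro x _ y hy hxy
  have hdeny : 0 < c + d * (P - y) := by nlinarith [mem_Iic.mp hy]
  exact div_lt_div_of_pos_left hc hdeny (by nlinarith)

end Ratio

lemma antitoneOn_log_div_div_sub {v : ℝ} (hv : 0 < v) :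
    AntitoneOn (fun a => log (v / a) / (v - a)) (Ioo 0 v) := by
  intro x hx y hy hxy
  rcases hxy.eq_or_lt with rfl | hlt
  · rfl
  have key := strictConcaveOn_log_Ioi.concaveOn.neg.secant_mono_aux3 (mem_Ioi.mpr hx.1)
    (mem_Ioi.mpr hv) hlt hy.2
  simp only [Pi.neg_apply] at key
  simp only [log_div hv.ne' hy.1.ne', log_div hv.ne' hx.1.ne']
  linear_combination key

lemma antitoneOn_outage_term {b k C P : ℝ} (hb : 0 < b) (hk : 0 < k) (hC : 0 ≤ C) :
    AntitoneOn (fun x => C / ((P - x) * k) * log ((b + k * P) / (b + k * x))) (Ico 0 P) := by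
  have hsecant : ∀ x, C / ((P - x) * k) * log ((b + k * P) / (b + k * x)) =
      C * (log ((b + k * P) / (b + k * x)) / (b + k * P - (b + k * x))) := fun x => by
    rw [show b + k * P - (b + k * x) = (P - x) * k by ring]
    ring
  have hmem : ∀ x ∈ Ico 0 P, b + k * x ∈ Ioo 0 (b + k * P) := fun x hx =>
    ⟨by nlinarith [hx.1], by nlinarith [hx.2]⟩
  intro x hx y hy hxy
  simp only [hsecant]
  exact mul_le_mul_of_nonneg_left (antitoneOn_log_div_div_sub (by nlinarith [hx.1, hx.2])
    (hmem x hx) (hmem y hy) (by nlinarith)) hC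

theorem stmt_13_general (lab lbb law lbw mu phi Pa Pmax sb2 π0 π1 : ℝ)
    (hlab : 0 < lab) (hlbb : 0 < lbb) (hlaw : 0 < law) (hlbw : 0 < lbw)
    (hmu : 0 < mu) (hphi : 0 < phi) (hPa : 0 < Pa) (hPmax : 0 < Pmax)
    (hπ1 : 0 ≤ π1) (hminpos : 0 < min π0 π1)
    (t : ℝ → ℝ) (PE : ℝ → ℝ) (δ : ℝ → ℝ)
    (ht : ∀ Pmin, t Pmin = lbw * Pa / (lbw * Pa + law * (Pmax - Pmin)))
    (hPE : ∀ Pmin, PE Pmin = min π0 π1 * (1 + t Pmin * log (t Pmin) - (t Pmin) ^ 2))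
    (hδ : ∀ Pmin, δ Pmin =
      1 - lbb * exp (-(lab * mu * sb2)) / ((Pmax - Pmin) * (lab * phi * mu)) *
        log ((lbb + lab * phi * mu * Pmax) / (lbb + lab * phi * mu * Pmin))) :
    StrictAntiOn PE (Ico 0 Pmax) ∧
    MonotoneOn δ (Ico 0 Pmax) ∧
    ∀ τ Rab : ℝ, 0 < Rab →
      ∀ Pmin ∈ Ico (0 : ℝ) Pmax,
        π1 * Rab * (1 - δ Pmin) ≥ τ →
          π1 * Rab * (1 - δ 0) ≥ τ ∧ PE 0 ≥ PE Pmin := by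
  have hc : 0 < lbw * Pa := mul_pos hlbw hPa
  have hPE_anti : StrictAntiOn PE (Ico 0 Pmax) := by
    intro x hx y hy hxy
    rw [hPE, hPE, ht, ht]
    exact mul_lt_mul_of_pos_left (strictAntiOn_one_add_mul_log_sub_sq
      (div_add_mul_sub_pos hc hlaw hx.2.le) (div_add_mul_sub_pos hc hlaw hy.2.le)
      (strictMonoOn_div_add_mul_sub hc hlaw hx.2.le hy.2.le hxy)) hminpos
  have hδ_mono : MonotoneOn δ (Ico 0 Pmax) := by
    intro x hx y hy hxy
    rw [hδ, hδ]
    linarith [antitoneOn_outage_term hlbb (by positivity : 0 < lab * phi * mu)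
      (by positivity : 0 ≤ lbb * exp (-(lab * mu * sb2))) hx hy hxy]
  refine ⟨hPE_anti, hδ_mono, fun τ Rab hRab Pmin hPmin hfeas => ⟨?_, ?_⟩⟩
  · have h0 : (0 : ℝ) ∈ Ico 0 Pmax := ⟨le_rfl, hPmax⟩
    have : π1 * Rab * (1 - δ Pmin) ≤ π1 * Rab * (1 - δ 0) :=
      mul_le_mul_of_nonneg_left (by linarith [hδ_mono h0 hPmin hPmin.1]) (by positivity)
    linarith
  · exact hPE_anti.antitoneOn ⟨le_rfl, hPmax⟩ hPmin hPmin.1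

/-- Proposition 2: with all other parameters fixed, the expected detection error probability
at Willie is strictly decreasing in `Pmin` and the outage probability is nondecreasing in
`Pmin` on `[0, Pmax)`; consequently `Pmin* = 0` maximizes covertness subject to the covert
rate constraint `π1 R_ab (1 - δ_ab(Pmin)) ≥ τ`. -/
theorem stmt_13 (lab lbb law lbw mu phi Pa Pmax sb2 π0 π1 : ℝ)
    (hlab : 0 < lab) (hlbb : 0 < lbb) (hlaw : 0 < law) (hlbw : 0 < lbw)
    (hmu : 0 < mu) (hphi : 0 < phi) (hPa : 0 < Pa) (hPmax : 0 < Pmax)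
    (hsb2 : 0 ≤ sb2) (hπ0 : 0 ≤ π0) (hπ1 : 0 ≤ π1) (hminpos : 0 < min π0 π1)
    (t : ℝ → ℝ) (PE : ℝ → ℝ) (δ : ℝ → ℝ)
    (ht : ∀ Pmin, t Pmin = lbw * Pa / (lbw * Pa + law * (Pmax - Pmin)))
    (hPE : ∀ Pmin, PE Pmin = min π0 π1 * (1 + t Pmin * log (t Pmin) - (t Pmin) ^ 2))
    (hδ : ∀ Pmin, δ Pmin =
      1 - lbb * exp (-(lab * mu * sb2)) / ((Pmax - Pmin) * (lab * phi * mu)) *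
        log ((lbb + lab * phi * mu * Pmax) / (lbb + lab * phi * mu * Pmin))) :
    StrictAntiOn PE (Ico 0 Pmax) ∧
    MonotoneOn δ (Ico 0 Pmax) ∧
    ∀ τ Rab : ℝ, 0 < Rab →
      ∀ Pmin ∈ Ico (0 : ℝ) Pmax,
        π1 * Rab * (1 - δ Pmin) ≥ τ →
          π1 * Rab * (1 - δ 0) ≥ τ ∧ PE 0 ≥ PE Pmin :=
  stmt_13_general lab lbb law lbw mu phi Pa Pmax sb2 π0 π1 hlab hlbb hlaw hlbw hmu hphi hPa hPmax
    hπ1 hminpos t PE δ ht hPE hδ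
end

section
/- Let $\lambda_{ab}, \lambda_{bb}, \mu, \phi > 0$ and $\sigma_b^2 \ge 0$, and for $P_{\max} > 0$ define $\delta_{ab}(P_{\max}) = 1 - \frac{\lambda_{bb} e^{-\lambda_{ab}\mu\sigma_b^2}}{\lambda_{ab}\phi\mu P_{\max}}\ln\!\left[\frac{\lambda_{bb}+\lambda_{ab}\phi\mu P_{\max}}{\lambda_{bb}}\right]$. Then $\delta_{ab}$ is continuous and strictly increasing on $(0,\infty)$, $\delta_{ab}(P_{\max}) \to 1 - e^{-\lambda_{ab}\mu\sigma_b^2}$ as $P_{\max} \to 0^+$, and $\delta_{ab}(P_{\max}) \to 1$ as $P_{\max} \to \infty$. Consequently, for every target value $d$ with $1 - e^{-\lambda_{ab}\mu\sigma_b^2} < d < 1$ there exists a unique $P_{\max}^\dagger > 0$ such that $\delta_{ab}(P_{\max}^\dagger) = d$. -/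
/-!
After the substitution `x = 1 + r P`, `δ_ab` is `1 - k ·` (the slope of the secant of `log`
through `1` and `x`). Strict concavity of `log` makes this slope strictly decreasing in `x`; it tends
to `log' 1 = 1` as `x → 1⁺` and to `0` as `x → ∞` because `log x = o(x)`. The intermediate value
theorem on `(0, ∞)` and strict monotonicity then give existence and uniqueness of `P_max^†`.
-/

open Real Set Filter Topology

theorem ContinuousOn.slope {𝕜 : Type*} [NontriviallyNormedField 𝕜] {f : 𝕜 → 𝕜} {s : Set 𝕜}
    {a : 𝕜} (hf : ContinuousOn f s) (ha : a ∉ s) : ContinuousOn (slope f a) s := by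
  have hne : ∀ b ∈ s, b - a ≠ 0 := fun b hb => sub_ne_zero.mpr (ne_of_mem_of_not_mem hb ha)
  simp only [slope_fun_def]
  exact ((continuousOn_id.sub continuousOn_const).inv₀ hne).smul (hf.sub continuousOn_const)

theorem strictAntiOn_slope_log_one : StrictAntiOn (slope log 1) (Ioi 1) := by
  intro x hx y hy hxy
  simp only [slope_def_field]
  exact strictConcaveOn_log_Ioi.secant_strict_mono (mem_Ioi.2 one_pos)
    (mem_Ioi.2 (one_pos.trans hx)) (mem_Ioi.2 (one_pos.trans hy)) hx.ne' hy.ne' hxy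

theorem continuousOn_slope_log_one : ContinuousOn (slope log 1) (Ioi 1) :=
  (continuousOn_log.mono fun _ hy => (one_pos.trans (mem_Ioi.1 hy)).ne').slope self_notMem_Ioi

theorem tendsto_slope_log_one_nhdsGT : Tendsto (slope log 1) (𝓝[>] 1) (𝓝 1) := by
  simpa using ((hasDerivAt_log one_ne_zero).tendsto_slope).mono_left (nhdsGT_le_nhdsNE 1)

theorem tendsto_slope_log_one_atTop : Tendsto (slope log 1) atTop (𝓝 0) := by
  have h := tendsto_pow_log_div_mul_add_atTop 1 (-1) 1 one_ne_zero
  refine h.congr fun x => ?_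
  simp [slope_def_field, sub_eq_add_neg]

theorem StrictMonoOn.existsUnique_eq_of_tendsto {α β : Type*} [ConditionallyCompleteLinearOrder α]
    [TopologicalSpace α] [OrderTopology α] [DenselyOrdered α] [NoMaxOrder α]
    [LinearOrder β] [TopologicalSpace β] [OrderClosedTopology β] {f : α → β} {a : α} {l u d : β}
    (hmono : StrictMonoOn f (Ioi a)) (hcont : ContinuousOn f (Ioi a))
    (hl : Tendsto f (𝓝[>] a) (𝓝 l)) (hu : Tendsto f atTop (𝓝 u)) (hld : l < d) (hdu : d < u) :
    ∃! x, a < x ∧ f x = d := by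
  obtain ⟨x, hx, rfl⟩ := isPreconnected_Ioi.intermediate_value_Ioo (l₁ := 𝓝[>] a) inf_le_right
    (le_principal_iff.mpr (Ioi_mem_atTop a)) hcont hl hu ⟨hld, hdu⟩
  exact ⟨x, ⟨hx, rfl⟩, fun y ⟨hy, hyx⟩ => hmono.injOn hy hx hyx⟩

theorem mapsTo_one_add_mul_Ioi_zero {r : ℝ} (hr : 0 < r) :
    MapsTo (fun P => 1 + r * P) (Ioi 0) (Ioi 1) := fun P (hP : 0 < P) => by
  simpa using mul_pos hr hP

theorem tendsto_one_add_mul_nhdsGT_zero {r : ℝ} (hr : 0 < r) :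
    Tendsto (fun P => 1 + r * P) (𝓝[>] 0) (𝓝[>] 1) := by
  have h : ContinuousWithinAt (fun P : ℝ => 1 + r * P) (Ioi 0) 0 := by fun_prop
  simpa using h.tendsto_nhdsWithin (mapsTo_one_add_mul_Ioi_zero hr)

/-- `δ_ab(P)` with `k = e^{-λ_ab μ σ_b²}` and `r = λ_ab φ μ / λ_bb`. -/
noncomputable def outageProb (k r P : ℝ) : ℝ := 1 - k * slope log 1 (1 + r * P)

theorem strictMonoOn_outageProb {k r : ℝ} (hk : 0 < k) (hr : 0 < r) :
    StrictMonoOn (outageProb k r) (Ioi 0) := by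
  have hanti : StrictAntiOn (fun P => slope log 1 (1 + r * P)) (Ioi 0) :=
    strictAntiOn_slope_log_one.comp_strictMonoOn
      (fun x _ y _ hxy => by simpa using mul_lt_mul_of_pos_left hxy hr)
      (mapsTo_one_add_mul_Ioi_zero hr)
  exact fun x hx y hy hxy => sub_lt_sub_left (mul_lt_mul_of_pos_left (hanti hx hy hxy) hk) 1

theorem continuousOn_outageProb (k : ℝ) {r : ℝ} (hr : 0 < r) :
    ContinuousOn (outageProb k r) (Ioi 0) :=
  continuousOn_const.sub <| continuousOn_const.mul <|
    continuousOn_slope_log_one.comp (by fun_prop) (mapsTo_one_add_mul_Ioi_zero hr)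

theorem tendsto_outageProb_nhdsGT_zero (k : ℝ) {r : ℝ} (hr : 0 < r) :
    Tendsto (outageProb k r) (𝓝[>] 0) (𝓝 (1 - k)) := by
  unfold outageProb
  simpa using tendsto_const_nhds.sub
    ((tendsto_slope_log_one_nhdsGT.comp (tendsto_one_add_mul_nhdsGT_zero hr)).const_mul k)

theorem tendsto_outageProb_atTop (k : ℝ) {r : ℝ} (hr : 0 < r) :
    Tendsto (outageProb k r) atTop (𝓝 1) := by
  unfold outageProb
  simpa using tendsto_const_nhds.sub ((tendsto_slope_log_one_atTop.comp
    (tendsto_atTop_add_const_left _ 1 (tendsto_id.const_mul_atTop hr))).const_mul k)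

theorem stmt_16_general (lab lbb mu phi sb2 : ℝ)
    (hlab : 0 < lab) (hlbb : 0 < lbb) (hmu : 0 < mu) (hphi : 0 < phi)
    (δ : ℝ → ℝ)
    (hδ : ∀ Pmax, δ Pmax =
      1 - lbb * exp (-(lab * mu * sb2)) / (lab * phi * mu * Pmax) *
        log ((lbb + lab * phi * mu * Pmax) / lbb)) :
    ContinuousOn δ (Ioi 0) ∧
    StrictMonoOn δ (Ioi 0) ∧
    Tendsto δ (nhdsWithin 0 (Ioi 0)) (nhds (1 - exp (-(lab * mu * sb2)))) ∧
    Tendsto δ atTop (nhds 1) ∧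
    ∀ d : ℝ, 1 - exp (-(lab * mu * sb2)) < d → d < 1 →
      ∃! P : ℝ, 0 < P ∧ δ P = d := by
  set k := exp (-(lab * mu * sb2))
  set r := lab * phi * mu / lbb
  have hr : 0 < r := by positivity
  -- At `P = 0` both sides are `1` (division by zero gives `0`), so this holds on all of `ℝ`.
  obtain rfl : δ = outageProb k r := by
    funext P
    have harg : (lbb + lab * phi * mu * P) / lbb = 1 + r * P := by
      simp only [r]
      field_simp
    rw [hδ, outageProb, slope_def_field, log_one, sub_zero, add_sub_cancel_left, harg]
    rcases eq_or_ne P 0 with rfl | hP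
    · simp
    · simp only [r]
      field_simp
  have hmono := strictMonoOn_outageProb (exp_pos _ : 0 < k) hr
  have hcont := continuousOn_outageProb k hr
  have hlim0 := tendsto_outageProb_nhdsGT_zero k hr
  have hlimTop := tendsto_outageProb_atTop k hr
  exact ⟨hcont, hmono, hlim0, hlimTop, fun d hkd hd1 =>
    hmono.existsUnique_eq_of_tendsto hcont hlim0 hlimTop hkd hd1⟩

/-- The outage probability `δ_ab(Pmax)` (with `Pmin = 0`) is continuous and strictly
increasing on `(0,∞)`, tends to `1 - e^{-λ_ab μ σ_b²}` as `Pmax → 0⁺`, tends to `1`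
as `Pmax → ∞`, and hence takes every value `d ∈ (1 - e^{-λ_ab μ σ_b²}, 1)` at a
unique `Pmax† > 0`. -/
theorem stmt_16 (lab lbb mu phi sb2 : ℝ)
    (hlab : 0 < lab) (hlbb : 0 < lbb) (hmu : 0 < mu) (hphi : 0 < phi) (hsb2 : 0 ≤ sb2)
    (δ : ℝ → ℝ)
    (hδ : ∀ Pmax, δ Pmax =
      1 - lbb * exp (-(lab * mu * sb2)) / (lab * phi * mu * Pmax) *
        log ((lbb + lab * phi * mu * Pmax) / lbb)) :
    ContinuousOn δ (Ioi 0) ∧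
    StrictMonoOn δ (Ioi 0) ∧
    Tendsto δ (nhdsWithin 0 (Ioi 0)) (nhds (1 - exp (-(lab * mu * sb2)))) ∧
    Tendsto δ atTop (nhds 1) ∧
    ∀ d : ℝ, 1 - exp (-(lab * mu * sb2)) < d → d < 1 →
      ∃! P : ℝ, 0 < P ∧ δ P = d :=
  stmt_16_general lab lbb mu phi sb2 hlab hlbb hmu hphi δ hδ
end

section
/- Let $\lambda_{aw}, \lambda_{bw}, P_a > 0$, and for $P_{\max} > 0$ set $s(P_{\max}) = \frac{\lambda_{bw} P_a}{\lambda_{bw} P_a + \lambda_{aw} P_{\max}}$. Then $s$ is strictly decreasing in $P_{\max}$, and the function $P_{\max} \mapsto \tfrac{1}{2}\left(1 + s\ln s - s^2\right)$ (with $s = s(P_{\max})$) is strictly increasing on $(0,\infty)$: for $0 < P_1 < P_2$, $\tfrac{1}{2}\kappa(s(P_1)) < \tfrac{1}{2}\kappa(s(P_2))$. -/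
open Real Set

/-- Willie's expected detection error probability is `kappa s / 2`. -/
noncomputable def kappa (x : ℝ) : ℝ := 1 + x * log x - x ^ 2

lemma hasDerivAt_kappa {x : ℝ} (hx : x ≠ 0) : HasDerivAt kappa (log x + 1 - 2 * x) x := by
  refine (((hasDerivAt_const x 1).add (hasDerivAt_mul_log hx)).sub
    (hasDerivAt_pow 2 x)).congr_deriv ?_
  norm_num

lemma kappa_strictAntiOn_Icc : StrictAntiOn kappa (Icc 0 1) := by
  refine strictAntiOn_of_deriv_neg (convex_Icc 0 1) ?_ fun x hx => ?_
  · exact ((continuous_const.add continuous_mul_log).sub (continuous_pow 2)).continuousOn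
  · rw [interior_Icc] at hx
    rw [(hasDerivAt_kappa hx.1.ne').deriv]
    -- `log x ≤ x - 1` bounds the derivative by `-x`
    linarith [log_le_sub_one_of_pos hx.1, hx.1]

lemma div_add_mul_mem_Icc {c a P : ℝ} (hc : 0 < c) (ha : 0 ≤ a) (hP : 0 ≤ P) :
    c / (c + a * P) ∈ Icc 0 1 :=
  ⟨by positivity, (div_le_one (by positivity)).2 (le_add_of_nonneg_right (by positivity))⟩

lemma div_add_mul_strictAntiOn {c a : ℝ} (hc : 0 < c) (ha : 0 < a) :
    StrictAntiOn (fun P => c / (c + a * P)) (Ici 0) := fun P₁ h₁ _ _ h =>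
  div_lt_div_of_pos_left hc (by simp only [mem_Ici] at h₁; positivity) (by gcongr)

/-- `s(Pmax) = λbw Pa / (λbw Pa + λaw Pmax)` is strictly decreasing in `Pmax`, and
`Pmax ↦ (1/2)(1 + s ln s - s²)` is strictly increasing on `(0,∞)`. -/
theorem stmt_17 (law lbw Pa : ℝ) (hlaw : 0 < law) (hlbw : 0 < lbw) (hPa : 0 < Pa)
    (s : ℝ → ℝ) (hs : ∀ Pmax, s Pmax = lbw * Pa / (lbw * Pa + law * Pmax)) :
    (∀ P1 P2 : ℝ, 0 < P1 → P1 < P2 → s P2 < s P1) ∧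
    (∀ P1 P2 : ℝ, 0 < P1 → P1 < P2 →
      (1 / 2) * (1 + s P1 * log (s P1) - (s P1) ^ 2) <
        (1 / 2) * (1 + s P2 * log (s P2) - (s P2) ^ 2)) := by
  have hc : 0 < lbw * Pa := mul_pos hlbw hPa
  have hs_anti : ∀ P1 P2 : ℝ, 0 < P1 → P1 < P2 → s P2 < s P1 := fun P1 P2 h1 h12 => by
    simpa only [hs] using
      div_add_mul_strictAntiOn hc hlaw (mem_Ici.2 h1.le) (mem_Ici.2 (h1.trans h12).le) h12
  have hs_mem : ∀ P, 0 < P → s P ∈ Icc 0 1 := fun P hP => by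
    simpa only [hs] using div_add_mul_mem_Icc hc hlaw.le hP.le
  refine ⟨hs_anti, fun P1 P2 h1 h12 => ?_⟩
  have hκ :=
    kappa_strictAntiOn_Icc (hs_mem P2 (h1.trans h12)) (hs_mem P1 h1) (hs_anti P1 P2 h1 h12)
  unfold kappa at hκ
  linarith
end
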